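/- Let d: ℕ → ℕ with d(0) = 0 and d(n) the n-th letter (1-indexed) of the infinite word E_∞ (E_0 = "1", E_{n+1} = E_n E_n 0), and let a(n) = ∑_{j=0}^n d(j). Let p(n) = min{ j : a(j) = n } be the position of the n-th 1 in E_∞. Then for all n ≥ 1, p(n+1) - p(n) = r(n), where r(n) = ν₂(n) + 1 is the ruler function. -/

import Mathlib

/-- E_0 = "1", E_{n+1} = E_n ++ E_n ++ "0". -/
def Eword : ℕ → List ℕ
  | 0 => [1]
  | n + 1 => Eword n ++ Eword n ++ [0]

/-- d(0) = 0 and d(n) is the n-th letter (1-indexed) of the infinite word E_∞. -/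
def dword (n : ℕ) : ℕ := if n = 0 then 0 else (Eword n).getD (n - 1) 0

/-- a(n) = ∑_{j=0}^n d(j). -/
def aword (n : ℕ) : ℕ := ∑ j ∈ Finset.range (n + 1), dword j

/-- p(n) = min { j : a(j) = n }, the position of the n-th 1 in E_∞. -/
noncomputable def pword (n : ℕ) : ℕ := sInf {j | aword j = n}

/-!
Since `E_{k+1} = E_k E_k 0` and `|E_k| = 2^(k+1) - 1`, the counting function satisfies
`a(m + 2^(k+1) - 1) = 2^k + a(m)` for `m ≤ 2^(k+1) - 1`. Peeling off the leading binary digit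
of `n` then shows that the `(n+1)`-st `1` of `E_∞` sits at position `2n + 1 - s₂(n)`, where
`s₂` is the binary digit sum. Legendre's formula gives `s₂(n - 1) + 1 = s₂(n) + ν₂(n)`, so
consecutive positions differ by `ν₂(n) + 1`.
-/

theorem Nat.digits_sum_add_base_pow_mul {b k x : ℕ} (m : ℕ) (hb : 1 < b) (hx : x < b ^ k) :
    (b.digits (x + b ^ k * m)).sum = (b.digits x).sum + (b.digits m).sum := by
  rcases Nat.eq_zero_or_pos m with rfl | hm
  · simp
  have hlen : (b.digits x).length ≤ k := (Nat.digits_length_le_iff hb x).2 hx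
  have hconcat :=
    Nat.digits_append_zeroes_append_digits (k := k - (b.digits x).length) hb hm (n := x)
  rw [Nat.add_sub_cancel' hlen] at hconcat
  simp [← hconcat]

theorem sub_one_mul_padicValNat_succ_add_digits_sum (p : ℕ) [Fact p.Prime] (n : ℕ) :
    (p - 1) * padicValNat p (n + 1) + (p.digits (n + 1)).sum = (p.digits n).sum + 1 := by
  have hfact : padicValNat p (n + 1).factorial =
      padicValNat p (n + 1) + padicValNat p n.factorial := by
    rw [Nat.factorial_succ, padicValNat.mul n.succ_ne_zero n.factorial_ne_zero]
  have legendre_succ := sub_one_mul_padicValNat_factorial (p := p) (n + 1)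
  rw [hfact, mul_add, sub_one_mul_padicValNat_factorial] at legendre_succ
  have := Nat.digit_sum_le p n
  have := Nat.digit_sum_le p (n + 1)
  omega

theorem Eword_length (k : ℕ) : (Eword k).length = 2 ^ (k + 1) - 1 := by
  induction k with
  | zero => rfl
  | succ k ih =>
    have := k.one_le_two_pow
    simp only [Eword, List.length_append, ih, List.length_singleton, pow_succ]
    omega

theorem Eword_sum (k : ℕ) : (Eword k).sum = 2 ^ k := by
  induction k with
  | zero => rfl
  | succ k ih => simp [Eword, ih, pow_succ, mul_two]

theorem Eword_prefix_of_le {k l : ℕ} (h : k ≤ l) : Eword k <+: Eword l := by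
  induction l, h using Nat.le_induction with
  | base => exact List.prefix_refl _
  | succ l _ ih =>
    exact ih.trans (by rw [Eword, List.append_assoc]; exact List.prefix_append _ _)

theorem dword_succ_eq_getElem {k m : ℕ} (hm : m < (Eword k).length) :
    dword (m + 1) = (Eword k)[m] := by
  have hm' : m < (Eword (m + 1)).length := by
    rw [Eword_length]
    have := (m + 1).lt_two_pow_self
    rw [pow_succ]
    omega
  rw [dword, if_neg m.succ_ne_zero, Nat.add_sub_cancel, List.getD_eq_getElem _ _ hm',
    (Eword_prefix_of_le (le_max_left (m + 1) k)).getElem hm',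
    (Eword_prefix_of_le (le_max_right (m + 1) k)).getElem hm]

theorem aword_zero : aword 0 = 0 := by simp [aword, dword]

theorem aword_succ (m : ℕ) : aword (m + 1) = aword m + dword (m + 1) :=
  Finset.sum_range_succ _ _

theorem aword_mono : Monotone aword :=
  monotone_nat_of_le_succ fun m => aword_succ m ▸ Nat.le_add_right _ _

theorem aword_eq_sum_take {k m : ℕ} (hm : m ≤ (Eword k).length) :
    aword m = ((Eword k).take m).sum := by
  induction m with
  | zero => simp [aword_zero]
  | succ m ih =>
    rw [aword_succ, ih (by omega), List.sum_take_succ _ _ hm, dword_succ_eq_getElem hm]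

theorem aword_add_Eword_length {k m : ℕ} (hm : m ≤ (Eword k).length) :
    aword (m + (Eword k).length) = 2 ^ k + aword m := by
  have hE : Eword (k + 1) = Eword k ++ (Eword k ++ [0]) := List.append_assoc _ _ _
  have hle : m + (Eword k).length ≤ (Eword (k + 1)).length := by
    rw [hE, List.length_append, List.length_append]
    omega
  rw [aword_eq_sum_take hle, aword_eq_sum_take hm, hE, add_comm m,
    List.take_length_add_append, List.sum_append, Eword_sum,
    List.take_append_of_le_length hm]

/-- The position of the `(n + 1)`-st `1` of `E_∞`, i.e. `p(n + 1)`. -/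
def onePos (n : ℕ) : ℕ := 2 * n + 1 - (Nat.digits 2 n).sum

theorem one_le_onePos (n : ℕ) : 1 ≤ onePos n := by
  have := Nat.digit_sum_le 2 n
  unfold onePos
  omega

theorem onePos_le {k m : ℕ} (hm : m < 2 ^ k) : onePos m ≤ 2 ^ (k + 1) - 1 := by
  rw [pow_succ]
  unfold onePos
  omega

theorem onePos_add_two_pow {k m : ℕ} (hm : m < 2 ^ k) :
    onePos (m + 2 ^ k) = onePos m + (2 ^ (k + 1) - 1) := by
  have hsum := Nat.digits_sum_add_base_pow_mul 1 one_lt_two hm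
  rw [mul_one, Nat.digits_of_lt 2 1 one_ne_zero one_lt_two] at hsum
  have := Nat.digit_sum_le 2 m
  unfold onePos
  rw [hsum, pow_succ]
  simp only [List.sum_singleton]
  omega

theorem aword_onePos (n : ℕ) : aword (onePos n) = n + 1 ∧ aword (onePos n - 1) = n := by
  induction n using Nat.strong_induction_on with
  | _ n ih =>
    rcases Nat.eq_zero_or_pos n with rfl | hn
    · exact ⟨rfl, aword_zero⟩
    set k := Nat.log 2 n
    set m := n - 2 ^ k
    have hkn : 2 ^ k ≤ n := Nat.pow_log_le_self 2 hn.ne'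
    have hnk : n < 2 ^ (k + 1) := Nat.lt_pow_succ_log_self one_lt_two n
    have hm : m < 2 ^ k := by
      rw [pow_succ] at hnk
      omega
    obtain ⟨ihm, ihm'⟩ := ih m (by omega)
    have hlen := Eword_length k
    have hpos := one_le_onePos m
    have hle := onePos_le hm
    have hn_eq : onePos n = onePos m + (Eword k).length := by
      rw [hlen, ← onePos_add_two_pow hm, Nat.sub_add_cancel hkn]
    constructor
    · rw [hn_eq, aword_add_Eword_length (by omega), ihm]
      omega
    · rw [hn_eq, show onePos m + (Eword k).length - 1 = onePos m - 1 + (Eword k).length by omega,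
        aword_add_Eword_length (by omega), ihm']
      omega

theorem pword_succ (n : ℕ) : pword (n + 1) = onePos n := by
  obtain ⟨hat, hbefore⟩ := aword_onePos n
  refine IsLeast.csInf_eq ⟨hat, fun j (hj : aword j = n + 1) => ?_⟩
  by_contra! hlt
  have := aword_mono (Nat.le_sub_one_of_lt hlt)
  omega

/-- The gaps between consecutive 1's in E_∞ are given by the ruler function:
    p(n+1) - p(n) = ν₂(n) + 1 for all n ≥ 1. -/
theorem pword_diff (n : ℕ) (hn : 1 ≤ n) :
    pword (n + 1) - pword n = padicValNat 2 n + 1 := by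
  obtain ⟨m, rfl⟩ := Nat.exists_eq_add_of_le' hn
  have hcarry := sub_one_mul_padicValNat_succ_add_digits_sum 2 m
  have := Nat.digit_sum_le 2 m
  have := Nat.digit_sum_le 2 (m + 1)
  rw [pword_succ, pword_succ]
  unfold onePos
  omega
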